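/- For any two 2×2 density matrices ρ₁, ρ₂, fidelity equals super-fidelity: (tr√(√ρ₁ ρ₂ √ρ₁))² = tr(ρ₁ρ₂) + √((1 - tr ρ₁²)(1 - tr ρ₂²)). -/

import Mathlib

/-!
Write `s = √(√ρ₁ ρ₂ √ρ₁)`. For any `2 × 2` matrix, Cayley–Hamilton gives
`(tr s)² = tr s² + 2 det s`. Here `tr s² = tr (ρ₁ ρ₂)` by cyclicity of the trace, and
`det s` is the nonnegative square root of `det s² = det ρ₁ det ρ₂`. Finally, a unit-trace
`2 × 2` matrix has `1 - tr ρ² = 2 det ρ`, so `2 det s = √((1 - tr ρ₁²)(1 - tr ρ₂²))`.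
-/

open Matrix ComplexOrder

attribute [local instance] Classical.propDecidable

/-- The positive semidefinite square root of a positive semidefinite matrix
(the definition removed from Mathlib, restored with its old value). -/
noncomputable def Matrix.PosSemidef.sqrt {n : Type*} [Fintype n] [DecidableEq n] {𝕜 : Type*}
    [RCLike 𝕜] {A : Matrix n n 𝕜} (hA : A.PosSemidef) : Matrix n n 𝕜 :=
  hA.1.eigenvectorUnitary.1 * diagonal ((↑) ∘ Real.sqrt ∘ hA.1.eigenvalues) *
  (star hA.1.eigenvectorUnitary : Matrix n n 𝕜)

/-- Fidelity `F(ρ₁,ρ₂) = (tr √(√ρ₁ ρ₂ √ρ₁))²` (0 when not defined). -/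
noncomputable def fid {n : Type*} [Fintype n] [DecidableEq n] (ρ₁ ρ₂ : Matrix n n ℂ) : ℝ :=
  if h1 : ρ₁.PosSemidef then
    if h2 : (h1.sqrt * ρ₂ * h1.sqrt).PosSemidef then (h2.sqrt.trace).re ^ 2 else 0
  else 0

namespace Matrix.PosSemidef

variable {n 𝕜 : Type*} [Fintype n] [DecidableEq n] [RCLike 𝕜] {A : Matrix n n 𝕜}

lemma posSemidef_sqrt (hA : A.PosSemidef) : hA.sqrt.PosSemidef := by
  have hD : (diagonal ((↑) ∘ Real.sqrt ∘ hA.1.eigenvalues) : Matrix n n 𝕜).PosSemidef := by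
    simp [posSemidef_diagonal_iff, Real.sqrt_nonneg]
  simpa [PosSemidef.sqrt, star_eq_conjTranspose] using
    hD.mul_mul_conjTranspose_same (hA.1.eigenvectorUnitary : Matrix n n 𝕜)

lemma sqrt_mul_self (hA : A.PosSemidef) : hA.sqrt * hA.sqrt = A := by
  set U : Matrix n n 𝕜 := (hA.1.eigenvectorUnitary : Matrix n n 𝕜)
  set D : Matrix n n 𝕜 := diagonal ((↑) ∘ Real.sqrt ∘ hA.1.eigenvalues)
  have hU : star U * U = 1 := Unitary.coe_star_mul_self _
  have hD : D * D = diagonal ((↑) ∘ hA.1.eigenvalues) := by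
    rw [diagonal_mul_diagonal]
    congr 1
    funext i
    simp only [Function.comp_apply, ← RCLike.ofReal_mul, Real.mul_self_sqrt (hA.eigenvalues_nonneg i)]
  have hA_eq := hA.1.spectral_theorem
  rw [Unitary.conjStarAlgAut_apply] at hA_eq
  calc hA.sqrt * hA.sqrt = U * (D * (star U * U) * D) * star U := by
        simp only [PosSemidef.sqrt, U, D, Matrix.mul_assoc]
    _ = A := by rw [hU, Matrix.mul_one, hD]; exact hA_eq.symm

lemma sqrt_mul_mul_sqrt {B : Matrix n n 𝕜} (hA : A.PosSemidef) (hB : B.PosSemidef) :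
    (hA.sqrt * B * hA.sqrt).PosSemidef := by
  simpa only [hA.posSemidef_sqrt.isHermitian.eq] using hB.conjTranspose_mul_mul_same hA.sqrt

lemma trace_sqrt_mul_mul_sqrt (hA : A.PosSemidef) (B : Matrix n n 𝕜) :
    (hA.sqrt * B * hA.sqrt).trace = (A * B).trace := by
  rw [trace_mul_cycle, hA.sqrt_mul_self]

lemma det_sqrt_sq (hA : A.PosSemidef) : hA.sqrt.det ^ 2 = A.det := by
  rw [sq, ← det_mul, hA.sqrt_mul_self]

end Matrix.PosSemidef

lemma Matrix.trace_mul_self_fin_two {R : Type*} [CommRing R] (A : Matrix (Fin 2) (Fin 2) R) :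
    (A * A).trace = A.trace ^ 2 - 2 * A.det := by
  simp only [trace_fin_two, det_fin_two, mul_apply, Fin.sum_univ_two]
  ring

lemma Matrix.one_sub_re_trace_mul_self_fin_two {A : Matrix (Fin 2) (Fin 2) ℂ} (hA : A.trace = 1) :
    1 - (A * A).trace.re = 2 * A.det.re := by
  simp [A.trace_mul_self_fin_two, hA]

lemma Complex.eq_re_of_nonneg {z : ℂ} (hz : 0 ≤ z) : z = z.re :=
  eq_re_of_ofReal_le (r := 0) (by simpa using hz)

theorem fid_fin_two {ρ₁ ρ₂ : Matrix (Fin 2) (Fin 2) ℂ} (h1 : ρ₁.PosSemidef) (h2 : ρ₂.PosSemidef) :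
    fid ρ₁ ρ₂ = (ρ₁ * ρ₂).trace.re + 2 * √(ρ₁.det.re * ρ₂.det.re) := by
  have hM := h1.sqrt_mul_mul_sqrt h2
  rw [fid, dif_pos h1, dif_pos hM]
  set s := hM.sqrt
  have hs : s.PosSemidef := hM.posSemidef_sqrt
  have htr : s.trace ^ 2 = (ρ₁ * ρ₂).trace + 2 * s.det := by
    rw [← h1.trace_sqrt_mul_mul_sqrt, ← hM.sqrt_mul_self, trace_mul_self_fin_two]
    ring
  have hdet : s.det ^ 2 = ρ₁.det * ρ₂.det := by
    rw [hM.det_sqrt_sq, det_mul, det_mul, mul_right_comm, ← sq, h1.det_sqrt_sq]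
  rw [Complex.eq_re_of_nonneg hs.trace_nonneg, Complex.eq_re_of_nonneg hs.det_nonneg] at htr
  rw [Complex.eq_re_of_nonneg hs.det_nonneg, Complex.eq_re_of_nonneg h1.det_nonneg,
    Complex.eq_re_of_nonneg h2.det_nonneg] at hdet
  have hdet_re : s.det.re ^ 2 = ρ₁.det.re * ρ₂.det.re := by exact_mod_cast hdet
  have hdet_nonneg : 0 ≤ s.det.re := (Complex.nonneg_iff.mp hs.det_nonneg).1
  have htr_re : s.trace.re ^ 2 = (ρ₁ * ρ₂).trace.re + 2 * s.det.re := by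
    rw [← Complex.ofReal_pow] at htr
    simpa [-Complex.ofReal_pow] using congrArg Complex.re htr
  rw [htr_re, ← hdet_re, Real.sqrt_sq hdet_nonneg]

theorem fidelity_eq_superFidelity_qubit (ρ₁ ρ₂ : Matrix (Fin 2) (Fin 2) ℂ)
    (h1 : ρ₁.PosSemidef) (h2 : ρ₂.PosSemidef)
    (t1 : ρ₁.trace = 1) (t2 : ρ₂.trace = 1) :
    fid ρ₁ ρ₂ = ((ρ₁ * ρ₂).trace).re +
      Real.sqrt ((1 - ((ρ₁ * ρ₁).trace).re) * (1 - ((ρ₂ * ρ₂).trace).re)) := by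
  rw [fid_fin_two h1 h2, one_sub_re_trace_mul_self_fin_two t1,
    one_sub_re_trace_mul_self_fin_two t2]
  rw [show 2 * ρ₁.det.re * (2 * ρ₂.det.re) = 2 ^ 2 * (ρ₁.det.re * ρ₂.det.re) by ring,
    Real.sqrt_mul (x := 2 ^ 2) (by positivity), Real.sqrt_sq zero_le_two]
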